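/- arXiv:1508.05378 — 3 statements merged into one kernel-verified Lean document; each statement's English description precedes it below -/
import Mathlib

section
/- Let H be immersed in G via an immersion φ, and let C be a blob (maximal 2-edge-connected subgraph) of H. Then there is a blob D of G such that the restriction of φ to the vertices and edges of C is an immersion of C into D. -/
open SimpleGraph

/-- An immersion (strong immersion) of `H` into `G`. -/
structure Immersion {V W : Type*} (H : SimpleGraph V) (G : SimpleGraph W) where
  toFun : V → W
  injective : Function.Injective toFun
  walk : ∀ ⦃u v : V⦄, H.Adj u v → G.Walk (toFun u) (toFun v)
  walk_isPath : ∀ ⦃u v : V⦄ (h : H.Adj u v), (walk h).IsPath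
  walk_nontrivial : ∀ ⦃u v : V⦄ (h : H.Adj u v), 0 < (walk h).length
  walk_symm : ∀ ⦃u v : V⦄ (h : H.Adj u v), walk h.symm = (walk h).reverse
  walk_edgeDisjoint : ∀ ⦃u v u' v' : V⦄ (h : H.Adj u v) (h' : H.Adj u' v'),
    s(u, v) ≠ s(u', v') → ∀ e ∈ (walk h).edges, e ∉ (walk h').edges
  avoid : ∀ ⦃u v : V⦄ (h : H.Adj u v) (w : V), w ≠ u → w ≠ v → toFun w ∉ (walk h).support

/-- `H` is immersed in `G`. -/
def Immersed {V W : Type*} (H : SimpleGraph V) (G : SimpleGraph W) : Prop :=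
  Nonempty (Immersion H G)

/-- A graph is 2-edge-connected if it is connected, has an edge, and stays connected
after deletion of any single edge. -/
def TwoEdgeConnected {V : Type*} (G : SimpleGraph V) : Prop :=
  G.Connected ∧ G.edgeSet.Nonempty ∧ ∀ e ∈ G.edgeSet, (G.deleteEdges {e}).Connected

/-- A blob of `G` is a maximal 2-edge-connected subgraph of `G`. -/
def IsBlob {V : Type*} (G : SimpleGraph V) (B : G.Subgraph) : Prop :=
  TwoEdgeConnected B.coe ∧ ∀ B' : G.Subgraph, B ≤ B' → TwoEdgeConnected B'.coe → B' = B

/-- An immersion induces an isomorphism if its vertex map is a bijection preserving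
and reflecting adjacency. -/
def Immersion.InducesIso {V W : Type*} {H : SimpleGraph V} {G : SimpleGraph W}
    (φ : Immersion H G) : Prop :=
  Function.Bijective φ.toFun ∧ ∀ u v : V, H.Adj u v ↔ G.Adj (φ.toFun u) (φ.toFun v)

/-- An immersion is proper if it does not induce an isomorphism. -/
def Immersion.IsProper {V W : Type*} {H : SimpleGraph V} {G : SimpleGraph W}
    (φ : Immersion H G) : Prop := ¬ φ.InducesIso

/-- `H` is properly immersed in `G`. -/
def ProperlyImmersed {V W : Type*} (H : SimpleGraph V) (G : SimpleGraph W) : Prop :=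
  ∃ φ : Immersion H G, φ.IsProper

/-- A self-immersion is trivial if it induces the identity map on vertices and sends
each edge to itself. -/
def Immersion.IsTrivial {V : Type*} {G : SimpleGraph V} (φ : Immersion G G) : Prop :=
  (∀ v, φ.toFun v = v) ∧ ∀ ⦃u v : V⦄ (h : G.Adj u v), (φ.walk h).edges = [s(u, v)]

/-!
The vertices `φ c` and the walks `φ e` for `c`, `e` in `C` form a subgraph `T = φ.image C` of `G`
which is 2-edge-connected. Indeed, an edge `ε` of `T` lies on `φ e₀` for a single edge `e₀` of `C`, by
edge-disjointness; since `C - e₀` is connected, the images of the walks of `C - e₀` join all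
`φ c` while avoiding `ε`; and every vertex of `T` lies on some path `φ e`, one of whose two halves
avoids `ε` and leads to an endpoint `φ c`. Directed unions of 2-edge-connected subgraphs are
2-edge-connected, so by Zorn's lemma `T` lies in a blob `D`, and the walks `φ e` lift to `D`.
-/

namespace SimpleGraph

variable {V : Type*} {G : SimpleGraph V}

theorem Walk.toSubgraph_le_deleteEdges_iff {u v : V} (p : G.Walk u v) (B : G.Subgraph)
    (e : Sym2 V) : p.toSubgraph ≤ B.deleteEdges {e} ↔ p.toSubgraph ≤ B ∧ e ∉ p.edges := by
  constructor
  · intro h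
    refine ⟨h.trans (Subgraph.deleteEdges_le _), fun he => ?_⟩
    induction e using Sym2.ind with
    | _ a b => exact ((Subgraph.deleteEdges_adj _ _ _).mp
        (h.2 (p.adj_toSubgraph_iff_mem_edges.mpr he))).2 rfl
  · rintro ⟨h, he⟩
    refine ⟨h.1, fun a b hab => (Subgraph.deleteEdges_adj _ _ _).mpr ⟨h.2 hab, ?_⟩⟩
    rintro rfl
    exact he (p.adj_toSubgraph_iff_mem_edges.mp hab)

theorem twoEdgeConnected_coe_iff_connected_deleteEdges {B : G.Subgraph} :
    TwoEdgeConnected B.coe ↔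
      B.edgeSet.Nonempty ∧ ∀ e ∈ B.edgeSet, (B.deleteEdges {e}).Connected := by
  have hdel : (∀ e ∈ B.coe.edgeSet, (B.coe.deleteEdges {e}).Connected) ↔
      ∀ e ∈ B.edgeSet, (B.deleteEdges {e}).Connected := by
    rw [← B.image_coe_edgeSet_coe, Set.forall_mem_image]
    refine forall₂_congr fun e _ => ?_
    rw [Subgraph.deleteEdges_coe_eq, Set.image_singleton, Subgraph.connected_iff']
    exact .rfl
  rw [TwoEdgeConnected, hdel, ← B.image_coe_edgeSet_coe, Set.image_nonempty]
  refine ⟨fun h => h.2, fun ⟨⟨e, he⟩, hconn⟩ => ⟨?_, ⟨e, he⟩, hconn⟩⟩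
  exact ((hconn _ (Set.mem_image_of_mem _ he)).mono (Subgraph.deleteEdges_le _) rfl).coe

theorem twoEdgeConnected_coe_iff_exists_walk {B : G.Subgraph} :
    TwoEdgeConnected B.coe ↔ B.edgeSet.Nonempty ∧ ∀ e ∈ B.edgeSet, ∀ ⦃u v⦄,
      u ∈ B.verts → v ∈ B.verts → ∃ p : G.Walk u v, p.toSubgraph ≤ B ∧ e ∉ p.edges := by
  simp only [twoEdgeConnected_coe_iff_connected_deleteEdges,
    Subgraph.connected_iff_forall_exists_walk_subgraph, Subgraph.deleteEdges_verts,
    Walk.toSubgraph_le_deleteEdges_iff]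
  refine and_congr_right fun ⟨e, he⟩ => forall₂_congr fun _ _ => and_iff_right ?_
  induction e using Sym2.ind with
  | _ a b => exact ⟨a, B.edge_vert he⟩

theorem twoEdgeConnected_coe_sSup {c : Set G.Subgraph} (hc : DirectedOn (· ≤ ·) c)
    (hne : c.Nonempty) (h : ∀ B ∈ c, TwoEdgeConnected B.coe) :
    TwoEdgeConnected (sSup c).coe := by
  simp only [twoEdgeConnected_coe_iff_exists_walk] at h ⊢
  obtain ⟨B₀, hB₀⟩ := hne
  refine ⟨(h B₀ hB₀).1.mono (Subgraph.edgeSet_mono (le_sSup hB₀)), fun e he u v hu hv => ?_⟩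
  simp only [Subgraph.edgeSet_sSup, Subgraph.verts_sSup, Set.mem_iUnion] at he hu hv
  obtain ⟨Be, hBe, he⟩ := he
  obtain ⟨Bu, hBu, hu⟩ := hu
  obtain ⟨Bv, hBv, hv⟩ := hv
  obtain ⟨Z₁, hZ₁, hBeZ₁, hBuZ₁⟩ := hc Be hBe Bu hBu
  obtain ⟨Z, hZ, hZ₁Z, hBvZ⟩ := hc Z₁ hZ₁ Bv hBv
  obtain ⟨p, hpZ, hep⟩ := (h Z hZ).2 e (Subgraph.edgeSet_mono (hBeZ₁.trans hZ₁Z) he)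
    ((hBuZ₁.trans hZ₁Z).1 hu) (hBvZ.1 hv)
  exact ⟨p, hpZ.trans (le_sSup hZ), hep⟩

theorem exists_isBlob_ge {B : G.Subgraph} (hB : TwoEdgeConnected B.coe) :
    ∃ D, B ≤ D ∧ IsBlob G D := by
  obtain ⟨D, hBD, hD⟩ := zorn_le_nonempty₀ {B : G.Subgraph | TwoEdgeConnected B.coe}
    (fun c hcs hc B' hB' => ⟨sSup c, twoEdgeConnected_coe_sSup hc.directedOn ⟨B', hB'⟩ hcs,
      fun _ => le_sSup⟩) B hB
  exact ⟨D, hBD, hD.prop, fun B' hDB' hB' => le_antisymm (hD.le_of_ge hB' hDB') hDB'⟩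

theorem Walk.IsTrail.exists_walk_avoiding {u v x : V} {p : G.Walk u v} (hp : p.IsTrail)
    (hx : x ∈ p.support) (e : Sym2 V) :
    (∃ q : G.Walk x u, q.toSubgraph ≤ p.toSubgraph ∧ e ∉ q.edges) ∨
      ∃ q : G.Walk x v, q.toSubgraph ≤ p.toSubgraph ∧ e ∉ q.edges := by
  classical
  have hsplit := congrArg Walk.toSubgraph (p.take_spec hx)
  rw [Walk.toSubgraph_append] at hsplit
  by_cases he : e ∈ (p.takeUntil x hx).edges
  · exact .inr ⟨p.dropUntil x hx, hsplit ▸ le_sup_right,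
      hp.disjoint_edges_takeUntil_dropUntil hx he⟩
  · refine .inl ⟨(p.takeUntil x hx).reverse, ?_, by rwa [Walk.edges_reverse, List.mem_reverse]⟩
    rw [Walk.toSubgraph_reverse, ← hsplit]
    exact le_sup_left

def Walk.liftToSubgraph {u v : V} (p : G.Walk u v) {D : G.Subgraph} (h : p.toSubgraph ≤ D) :
    D.coe.Walk ⟨u, h.1 p.start_mem_verts_toSubgraph⟩ ⟨v, h.1 p.end_mem_verts_toSubgraph⟩ :=
  p.mapToSubgraph.map (Subgraph.inclusion h)

theorem Walk.map_hom_liftToSubgraph {u v : V} (p : G.Walk u v) {D : G.Subgraph}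
    (h : p.toSubgraph ≤ D) : (p.liftToSubgraph h).map D.hom = p :=
  (Walk.map_map _ _ _).trans p.map_mapToSubgraph_hom

section liftToSubgraph

variable {u v : V} {p : G.Walk u v} {D : G.Subgraph} {h : p.toSubgraph ≤ D}

theorem Walk.map_mem_edges_of_mem_edges_liftToSubgraph {e : Sym2 D.verts}
    (he : e ∈ (p.liftToSubgraph h).edges) : e.map (↑) ∈ p.edges := by
  have := List.mem_map_of_mem (f := Sym2.map D.hom) he
  rwa [← Walk.edges_map, Walk.map_hom_liftToSubgraph] at this

theorem Walk.coe_mem_support_of_mem_support_liftToSubgraph {x : D.verts}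
    (hx : x ∈ (p.liftToSubgraph h).support) : ↑x ∈ p.support := by
  have := List.mem_map_of_mem (f := D.hom) hx
  rwa [← Walk.support_map, Walk.map_hom_liftToSubgraph] at this

end liftToSubgraph

end SimpleGraph

namespace Immersion

variable {V W : Type*} {H : SimpleGraph V} {G : SimpleGraph W} (φ : Immersion H G)

def mapWalk : ∀ {u v : V}, H.Walk u v → G.Walk (φ.toFun u) (φ.toFun v)
  | _, _, .nil => .nil
  | _, _, .cons h q => (φ.walk h).append (mapWalk q)

theorem exists_of_mem_edges_mapWalk {u v : V} {q : H.Walk u v} {e : Sym2 W}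
    (he : e ∈ (φ.mapWalk q).edges) :
    ∃ (a b : V) (h : H.Adj a b), s(a, b) ∈ q.edges ∧ e ∈ (φ.walk h).edges := by
  induction q with
  | nil => simp [mapWalk] at he
  | cons h q ih =>
    rw [mapWalk, Walk.edges_append, List.mem_append] at he
    rcases he with he | he
    · exact ⟨_, _, h, List.mem_cons_self, he⟩
    · obtain ⟨a, b, hab, hq, he⟩ := ih he
      exact ⟨a, b, hab, List.mem_cons_of_mem _ hq, he⟩

-- `φ c` is added explicitly, so that it lies in the image even if `c` is isolated in `C`.
def image (C : H.Subgraph) : G.Subgraph :=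
  (⨆ c ∈ C.verts, G.singletonSubgraph (φ.toFun c)) ⊔
    ⨆ (u) (v) (h : C.Adj u v), (φ.walk (C.adj_sub h)).toSubgraph

variable {φ} {C : H.Subgraph}

theorem toFun_mem_image_verts {c : V} (hc : c ∈ C.verts) : φ.toFun c ∈ (φ.image C).verts := by
  simp only [image, Subgraph.verts_sup, Subgraph.verts_iSup, singletonSubgraph_verts]
  exact .inl (Set.mem_biUnion hc rfl)

theorem walk_toSubgraph_le_image {u v : V} (h : C.Adj u v) :
    (φ.walk (C.adj_sub h)).toSubgraph ≤ φ.image C :=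
  le_sup_of_le_right (le_iSup_of_le u (le_iSup_of_le v (le_iSup_of_le h le_rfl)))

theorem mem_image_verts {x : W} (hx : x ∈ (φ.image C).verts) :
    (∃ c ∈ C.verts, φ.toFun c = x) ∨
      ∃ (u v : V) (h : C.Adj u v), x ∈ (φ.walk (C.adj_sub h)).support := by
  simpa [image, Subgraph.verts_sup, Subgraph.verts_iSup, eq_comm] using hx

theorem mem_image_edgeSet {e : Sym2 W} (he : e ∈ (φ.image C).edgeSet) :
    ∃ (u v : V) (h : C.Adj u v), e ∈ (φ.walk (C.adj_sub h)).edges := by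
  simpa [image, Subgraph.edgeSet_sup, Subgraph.edgeSet_iSup] using he

theorem mapWalk_toSubgraph_le_image {u v : V} {q : H.Walk u v} (hq : q.toSubgraph ≤ C) :
    (φ.mapWalk q).toSubgraph ≤ φ.image C := by
  induction q with
  | nil =>
    exact (singletonSubgraph_le_iff _ _).mpr
      (toFun_mem_image_verts ((singletonSubgraph_le_iff _ _).mp hq))
  | cons h q ih =>
    rw [Walk.toSubgraph, sup_le_iff] at hq
    rw [mapWalk, Walk.toSubgraph_append]
    exact sup_le (walk_toSubgraph_le_image (hq.1.2 rfl : C.Adj _ _)) (ih hq.2)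

theorem exists_walk_image_to_toFun {x : W} (hx : x ∈ (φ.image C).verts) (e : Sym2 W) :
    ∃ c ∈ C.verts, ∃ p : G.Walk x (φ.toFun c), p.toSubgraph ≤ φ.image C ∧ e ∉ p.edges := by
  rcases mem_image_verts hx with ⟨c, hc, rfl⟩ | ⟨u, v, h, hx⟩
  · exact ⟨c, hc, .nil, by simpa using toFun_mem_image_verts hc, by simp⟩
  · rcases (φ.walk_isPath _).isTrail.exists_walk_avoiding hx e with ⟨q, hq, he⟩ | ⟨q, hq, he⟩
    · exact ⟨u, C.edge_vert h, q, hq.trans (walk_toSubgraph_le_image h), he⟩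
    · exact ⟨v, C.edge_vert h.symm, q, hq.trans (walk_toSubgraph_le_image h), he⟩

theorem exists_walk_image_between (hC : TwoEdgeConnected C.coe) {e : Sym2 W}
    (he : e ∈ (φ.image C).edgeSet) {a b : V} (ha : a ∈ C.verts) (hb : b ∈ C.verts) :
    ∃ p : G.Walk (φ.toFun a) (φ.toFun b), p.toSubgraph ≤ φ.image C ∧ e ∉ p.edges := by
  obtain ⟨u, v, h, heuv⟩ := mem_image_edgeSet he
  obtain ⟨q, hqC, huv⟩ := (twoEdgeConnected_coe_iff_exists_walk.mp hC).2 s(u, v) h ha hb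
  refine ⟨φ.mapWalk q, mapWalk_toSubgraph_le_image hqC, fun hq => ?_⟩
  obtain ⟨a', b', h', hab', he'⟩ := φ.exists_of_mem_edges_mapWalk hq
  exact φ.walk_edgeDisjoint (C.adj_sub h) h' (fun huv' => huv (huv' ▸ hab')) e heuv he'

theorem twoEdgeConnected_image (hC : TwoEdgeConnected C.coe) :
    TwoEdgeConnected (φ.image C).coe := by
  rw [twoEdgeConnected_coe_iff_exists_walk]
  refine ⟨?_, fun e he x y hx hy => ?_⟩
  · obtain ⟨e, he⟩ := (twoEdgeConnected_coe_iff_exists_walk.mp hC).1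
    induction e using Sym2.ind with
    | _ u v =>
      obtain ⟨e', he'⟩ := List.exists_mem_of_length_pos
        ((φ.walk (C.adj_sub he)).length_edges ▸ φ.walk_nontrivial _)
      exact ⟨e', Subgraph.edgeSet_mono (walk_toSubgraph_le_image he)
        ((Walk.mem_edges_toSubgraph _).mpr he')⟩
  · obtain ⟨a, ha, p, hp, hep⟩ := exists_walk_image_to_toFun hx e
    obtain ⟨b, hb, q, hq, heq⟩ := exists_walk_image_to_toFun hy e
    obtain ⟨r, hr, her⟩ := exists_walk_image_between hC he ha hb
    refine ⟨p.append (r.append q.reverse), ?_, ?_⟩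
    · simp only [Walk.toSubgraph_append, Walk.toSubgraph_reverse]
      exact sup_le hp (sup_le hr hq)
    · simp [Walk.edges_append, hep, heq, her]

def restrict (φ : Immersion H G) (C : H.Subgraph) (D : G.Subgraph) (hD : φ.image C ≤ D) :
    Immersion C.coe D.coe where
  toFun x := ⟨φ.toFun x, hD.1 (toFun_mem_image_verts x.2)⟩
  injective _ _ hxy := Subtype.ext (φ.injective (congrArg Subtype.val hxy))
  walk _ _ h := (φ.walk (C.adj_sub h)).liftToSubgraph ((walk_toSubgraph_le_image h).trans hD)
  walk_isPath _ _ _ := by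
    rw [← Walk.isPath_map_iff_of_injective Subgraph.hom_injective, Walk.map_hom_liftToSubgraph]
    exact φ.walk_isPath _
  walk_nontrivial _ _ _ := by
    rw [← Walk.length_map D.hom, Walk.map_hom_liftToSubgraph]
    exact φ.walk_nontrivial _
  walk_symm _ _ _ := by
    apply Walk.map_injective_of_injective Subgraph.hom_injective
    rw [← Walk.reverse_map, Walk.map_hom_liftToSubgraph, Walk.map_hom_liftToSubgraph]
    exact φ.walk_symm _
  walk_edgeDisjoint _ _ _ _ _ _ hne _ he he' :=
    φ.walk_edgeDisjoint _ _ (fun hne' => hne (Sym2.map.injective Subtype.val_injective hne')) _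
      (Walk.map_mem_edges_of_mem_edges_liftToSubgraph he)
      (Walk.map_mem_edges_of_mem_edges_liftToSubgraph he')
  avoid _ _ _ w hwx hwy hw :=
    φ.avoid _ w.1 (fun hwx' => hwx (Subtype.ext hwx')) (fun hwy' => hwy (Subtype.ext hwy'))
      (Walk.coe_mem_support_of_mem_support_liftToSubgraph hw)

theorem map_hom_restrict_walk (φ : Immersion H G) {C : H.Subgraph} {D : G.Subgraph}
    (hD : φ.image C ≤ D) {x y : C.verts} (h : C.coe.Adj x y) :
    ((φ.restrict C D hD).walk h).map D.hom = φ.walk (C.adj_sub h) :=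
  Walk.map_hom_liftToSubgraph _ _

end Immersion

/-- If `H` is immersed in `G` via `φ` and `C` is a blob of `H`, then there is a blob `D`
of `G` such that the restriction of `φ` to `C` is an immersion of `C` into `D`. -/
theorem immersion_blob {V W : Type} (H : SimpleGraph V) (G : SimpleGraph W)
    (φ : Immersion H G) (C : H.Subgraph) (hC : IsBlob H C) :
    ∃ D : G.Subgraph, IsBlob G D ∧
      ∃ ψ : Immersion C.coe D.coe,
        (∀ x : C.verts, (ψ.toFun x : W) = φ.toFun (x : V)) ∧
        ∀ ⦃x y : C.verts⦄ (h : C.coe.Adj x y) (hxy : H.Adj (x : V) (y : V))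
          (hx : (D.hom (ψ.toFun x) : W) = φ.toFun (x : V))
          (hy : (D.hom (ψ.toFun y) : W) = φ.toFun (y : V)),
          ((ψ.walk h).map D.hom).copy hx hy = φ.walk hxy := by
  obtain ⟨D, hD, hblob⟩ := exists_isBlob_ge (φ.twoEdgeConnected_image hC.1)
  -- `hx` and `hy` prove `φ x = φ x` up to defeq, so the `copy` reduces away.
  exact ⟨D, hblob, φ.restrict C D hD, fun _ => rfl,
    fun _ _ h _ _ _ => φ.map_hom_restrict_walk hD h⟩
end

section
/- Let 𝓗 be an infinite set of pairwise vertex-disjoint infinite 2-edge-connected graphs that forms an antichain with respect to the immersion relation, and suppose the vertex set of each member H of 𝓗 has cardinality at most the cardinality of 𝓗. Then there is a connected graph G such that the set of blobs of G is exactly 𝓗 and G admits no self-immersion except the trivial one (the identity). -/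
open SimpleGraph

/-!
Glue the graphs along bridges into a tree of blobs in which every vertex is the upper end of some
bridge; the cardinality bound leaves room for this.

The two sides of a bridge form an edge cut of size one. A self-immersion `φ` cannot send two
vertices of a 2-edge-connected blob to different sides of it, since the flipping edge and a
second flipping edge on a detour around it would both need the bridge. So `φ` maps each blob
into one blob, and into itself because the blobs form an immersion antichain. Now the walk of
the bridge hanging below a vertex `w` must use that bridge, hence passes through `w`, and it
avoids the images of all vertices other than its ends: so `w` is not in the image of `φ` unless
`φ w = w`. Taking `w = φ v` gives `φ (φ v) = φ v`, hence `φ v = v`, and then every edge is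
sent to itself.
-/

namespace SimpleGraph

variable {V : Type*} {G : SimpleGraph V}

theorem Walk.apply_eq_of_forall_dart {β : Type*} (f : V → β) {u v : V} (p : G.Walk u v)
    (hf : ∀ d ∈ p.darts, f d.fst = f d.snd) : ∀ z ∈ p.support, f z = f u := by
  induction p with
  | nil => simp
  | cons h p ih =>
    simp only [Walk.darts_cons, List.mem_cons, forall_eq_or_imp] at hf
    intro z hz
    rw [Walk.support_cons, List.mem_cons] at hz
    rcases hz with rfl | hz
    · rfl
    · exact (ih hf.2 z hz).trans hf.1.symm

theorem Walk.map_val_edges_induce {s : Set V} {u v : V} :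
    ∀ (p : G.Walk u v) (hp : ∀ x ∈ p.support, x ∈ s),
      (p.induce s hp).edges.map (Sym2.map Subtype.val) = p.edges
  | .nil, _ => rfl
  | .cons _ p, hp => by simp [Walk.map_val_edges_induce p]

theorem Walk.edges_eq_of_length_eq_one {u v : V} :
    ∀ (p : G.Walk u v), p.length = 1 → p.edges = [s(u, v)]
  | .cons _ .nil, _ => rfl

def IsOnlyCrossingEdge (G : SimpleGraph V) (C : Set V) (e : Sym2 V) : Prop :=
  ∀ ⦃a b : V⦄, G.Adj a b → a ∈ C → b ∉ C → s(a, b) = e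

namespace IsOnlyCrossingEdge

variable {C : Set V} {e : Sym2 V}

theorem mem_iff_mem_of_adj (hC : G.IsOnlyCrossingEdge C e) {a b : V} (h : G.Adj a b)
    (he : s(a, b) ≠ e) : a ∈ C ↔ b ∈ C := by
  refine ⟨fun ha => by_contra fun hb => he (hC h ha hb), fun hb => by_contra fun ha => ?_⟩
  exact he (Sym2.eq_swap.trans (hC h.symm hb ha))

theorem mem_iff_mem_of_not_mem_edges (hC : G.IsOnlyCrossingEdge C e) {u v : V}
    (p : G.Walk u v) (he : e ∉ p.edges) : u ∈ C ↔ v ∈ C := by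
  induction p with
  | nil => rfl
  | cons h p ih =>
    rw [Walk.edges_cons, List.mem_cons, not_or] at he
    exact (hC.mem_iff_mem_of_adj h (Ne.symm he.1)).trans (ih he.2)

theorem mem_edges_of_not_iff (hC : G.IsOnlyCrossingEdge C e) {u v : V} (p : G.Walk u v)
    (huv : ¬(u ∈ C ↔ v ∈ C)) : e ∈ p.edges :=
  by_contra fun he => huv (hC.mem_iff_mem_of_not_mem_edges p he)

theorem not_iff_of_mem_edges {x y : V} (hC : G.IsOnlyCrossingEdge C s(x, y)) (hx : x ∈ C)
    (hy : y ∉ C) {u v : V} (p : G.Walk u v) (hp : p.IsTrail) (he : s(x, y) ∈ p.edges) :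
    ¬(u ∈ C ↔ v ∈ C) := by
  induction p with
  | nil => simp at he
  | @cons u w v h p ih =>
    rw [Walk.isTrail_cons] at hp
    rw [Walk.edges_cons, List.mem_cons] at he
    by_cases hxy : s(u, w) = s(x, y)
    · have huw : ¬(u ∈ C ↔ w ∈ C) := by
        rcases Sym2.eq_iff.1 hxy with ⟨rfl, rfl⟩ | ⟨rfl, rfl⟩ <;> tauto
      have hwv := hC.mem_iff_mem_of_not_mem_edges p (hxy ▸ hp.2)
      tauto
    · have huw := hC.mem_iff_mem_of_adj h hxy
      have := ih hp.1 (he.resolve_left (Ne.symm hxy))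
      tauto

end IsOnlyCrossingEdge

theorem Iso.twoEdgeConnected {W : Type*} {G' : SimpleGraph W} (f : G ≃g G')
    (h : TwoEdgeConnected G) : TwoEdgeConnected G' := by
  obtain ⟨hconn, ⟨e, he⟩, hdel⟩ := h
  refine ⟨f.connected_iff.1 hconn, ⟨_, f.map_mem_edgeSet_iff.2 he⟩, fun e' he' => ?_⟩
  have hmap : (e'.map f.symm).map f = e' := by simp [Sym2.map_map]
  rw [← hmap] at he' ⊢
  have key : G.deleteEdges {e'.map f.symm} ≃g G'.deleteEdges {(e'.map f.symm).map f} :=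
    { toEquiv := f.toEquiv
      map_rel_iff' := by
        intro a b
        simp only [deleteEdges_adj, Set.mem_singleton_iff]
        change G'.Adj (f a) (f b) ∧ ¬s(f a, f b) = _ ↔ _
        rw [← Sym2.map_mk, (Sym2.map.injective f.injective).eq_iff, f.map_adj_iff] }
  exact key.connected_iff.1 (hdel _ (f.map_mem_edgeSet_iff.1 he'))

end SimpleGraph

theorem TwoEdgeConnected.not_isBridge_of_adj {V : Type*} {G : SimpleGraph V} {H : G.Subgraph}
    (hH : TwoEdgeConnected H.coe) {a b : V} (hab : H.Adj a b) : ¬G.IsBridge s(a, b) := by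
  have ha := H.edge_vert hab
  have hb := H.edge_vert hab.symm
  obtain ⟨p, hp⟩ := reachable_deleteEdges_iff_exists_walk.1
    ((hH.2.2 s(⟨a, ha⟩, ⟨b, hb⟩) hab).preconnected ⟨a, ha⟩ ⟨b, hb⟩)
  rw [isBridge_iff_forall_walk_mem_edges, not_forall]
  refine ⟨p.map H.hom, fun hmem => hp ?_⟩
  obtain ⟨e', he', hmap⟩ : ∃ e' ∈ p.edges, e'.map H.hom = s(a, b) := by
    rw [← List.mem_map, ← Walk.edges_map]
    exact hmem
  have := Sym2.map_mk H.hom ⟨a, ha⟩ ⟨b, hb⟩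
  rwa [Sym2.map.injective H.hom_injective (hmap.trans this.symm)] at he'

namespace Immersion

variable {V W X : Type*} {H : SimpleGraph V} {G : SimpleGraph W}

def comap {H' : SimpleGraph X} (φ : Immersion H G) (f : H' ↪g H) : Immersion H' G where
  toFun := φ.toFun ∘ f
  injective := φ.injective.comp f.injective
  walk _ _ h := φ.walk (f.map_adj_iff.2 h)
  walk_isPath _ _ _ := φ.walk_isPath _
  walk_nontrivial _ _ _ := φ.walk_nontrivial _
  walk_symm _ _ _ := φ.walk_symm _
  walk_edgeDisjoint _ _ _ _ _ _ hne :=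
    φ.walk_edgeDisjoint _ _ fun h => hne (Sym2.map.injective f.injective (by simpa using h))
  avoid _ _ _ w hu hv := φ.avoid _ (f w) (f.injective.ne hu) (f.injective.ne hv)

def map {G' : SimpleGraph X} (φ : Immersion H G) (f : G ↪g G') : Immersion H G' where
  toFun := f ∘ φ.toFun
  injective := f.injective.comp φ.injective
  walk _ _ h := (φ.walk h).map f.toHom
  walk_isPath _ _ h := (φ.walk_isPath h).map f.injective
  walk_nontrivial _ _ h := by simpa using φ.walk_nontrivial h
  walk_symm _ _ h := by rw [φ.walk_symm, Walk.reverse_map]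
  walk_edgeDisjoint _ _ _ _ h h' hne e he he' := by
    simp only [Walk.edges_map, List.mem_map] at he he'
    obtain ⟨e₁, h₁, rfl⟩ := he
    obtain ⟨e₂, h₂, he⟩ := he'
    rw [Sym2.map.injective f.injective he] at h₂
    exact φ.walk_edgeDisjoint h h' hne e₁ h₁ h₂
  avoid _ _ h w hu hv hw := by
    rw [Walk.support_map] at hw
    exact φ.avoid h w hu hv ((List.mem_map_of_injective (f := f.toHom) f.injective).1 hw)

def induce (φ : Immersion H G) (s : Set W) (hv : ∀ v, φ.toFun v ∈ s)
    (hw : ∀ ⦃u v⦄ (h : H.Adj u v), ∀ x ∈ (φ.walk h).support, x ∈ s) :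
    Immersion H (G.induce s) where
  toFun v := ⟨φ.toFun v, hv v⟩
  injective _ _ h := φ.injective (congrArg Subtype.val h)
  walk _ _ h := (φ.walk h).induce s (hw h)
  walk_isPath _ _ h := by
    apply Walk.IsPath.of_map (f := (Embedding.induce s).toHom)
    rw [Walk.map_induce]
    exact φ.walk_isPath h
  walk_nontrivial _ _ h := by
    rw [← Walk.length_map (Embedding.induce s).toHom, Walk.map_induce]
    exact φ.walk_nontrivial h
  walk_symm _ _ h := by
    apply Walk.map_injective_of_injective (f := (Embedding.induce (G := G) s).toHom)
      (Embedding.induce (G := G) s).injective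
    exact (Walk.map_induce _ _).trans <| (φ.walk_symm h).trans <|
      (congrArg Walk.reverse (Walk.map_induce (φ.walk h) (hw h))).symm.trans
        (Walk.reverse_map (Embedding.induce s).toHom _)
  walk_edgeDisjoint _ _ _ _ h h' hne e he he' := by
    refine φ.walk_edgeDisjoint h h' hne (e.map Subtype.val) ?_ ?_
    · rw [← Walk.map_val_edges_induce (φ.walk h) (hw h)]
      exact List.mem_map_of_mem he
    · rw [← Walk.map_val_edges_induce (φ.walk h') (hw h')]
      exact List.mem_map_of_mem he'
  avoid _ _ h w hu hv hmem := by
    rw [Walk.support_induce, List.mem_attachWith] at hmem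
    exact φ.avoid h w hu hv hmem

variable {C : Set W} {e : Sym2 W}

theorem mem_iff_mem_of_not_isBridge (φ : Immersion H G) (hC : G.IsOnlyCrossingEdge C e)
    {a b : V} (hab : H.Adj a b) (hbr : ¬H.IsBridge s(a, b)) :
    φ.toFun a ∈ C ↔ φ.toFun b ∈ C := by
  by_contra hside
  obtain ⟨p, hp⟩ := reachable_deleteEdges_iff_exists_walk.1 (not_not.1 (isBridge_iff.not.1 hbr))
  obtain ⟨d, hd, hfst, hsnd⟩ :=
    p.exists_boundary_dart {z | φ.toFun z ∈ C ↔ φ.toFun a ∈ C} Iff.rfl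
      (fun h => hside (Iff.symm h))
  have hne : s(d.fst, d.snd) ≠ s(a, b) := fun h => hp (h ▸ List.mem_map_of_mem hd)
  exact φ.walk_edgeDisjoint d.adj hab hne e
    (hC.mem_edges_of_not_iff _ fun h => hsnd (h.symm.trans hfst))
    (hC.mem_edges_of_not_iff _ hside)

theorem mem_iff_mem_of_twoEdgeConnected (φ : Immersion H G) (hC : G.IsOnlyCrossingEdge C e)
    {K : H.Subgraph} (hK : TwoEdgeConnected K.coe) {x y : V} (hx : x ∈ K.verts)
    (hy : y ∈ K.verts) : φ.toFun x ∈ C ↔ φ.toFun y ∈ C := by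
  by_contra hside
  obtain ⟨p⟩ := hK.1.preconnected ⟨x, hx⟩ ⟨y, hy⟩
  obtain ⟨d, -, hfst, hsnd⟩ := p.exists_boundary_dart
    {z | φ.toFun z.1 ∈ C ↔ φ.toFun x ∈ C} Iff.rfl (fun h => hside h.symm)
  have hd : K.Adj d.fst d.snd := d.adj
  have hdC := φ.mem_iff_mem_of_not_isBridge hC (K.adj_sub hd) (hK.not_isBridge_of_adj hd)
  exact hsnd (hdC.symm.trans hfst)

theorem isTrivial_of_forall_toFun_eq {G : SimpleGraph V} (φ : Immersion G G)
    (hφ : ∀ v, φ.toFun v = v) : φ.IsTrivial := by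
  refine ⟨hφ, fun u v h => ?_⟩
  have hsupp : (φ.walk h).support ⊆ [φ.toFun u, φ.toFun v] := by
    intro z hz
    rw [hφ, hφ]
    by_contra hz'
    simp only [List.mem_cons, List.not_mem_nil, or_false, not_or] at hz'
    exact φ.avoid h z hz'.1 hz'.2 (by rwa [hφ z])
  have hlen : (φ.walk h).length = 1 := by
    have := ((φ.walk_isPath h).support_nodup.subperm hsupp).length_le
    have := φ.walk_nontrivial h
    simp only [Walk.length_support, List.length_cons, List.length_nil] at *
    omega
  rw [(φ.walk h).edges_eq_of_length_eq_one hlen, hφ, hφ]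

end Immersion

universe u

open Cardinal in
theorem Cardinal.mk_sigma_le_of_forall_le {ι : Type u} {α : ι → Type u} [Infinite ι]
    (hcard : ∀ i, #(α i) ≤ #ι) : #(Σ i, α i) ≤ #ι :=
  calc #(Σ i, α i) = sum fun i => #(α i) := mk_sigma α
    _ ≤ sum fun _ : ι => #ι := sum_le_sum _ _ hcard
    _ = #ι := by rw [sum_const', mul_eq_self (aleph0_le_mk ι)]

/-- A rooted tree on `ι` along which graphs on the types `α i` are glued: every `j ≠ root` hangs
by a bridge from `⟨j, anchor j⟩` to the vertex `parent j` of a blob of smaller depth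
(`parent root` is junk). -/
structure BlobTree {ι : Type*} (α : ι → Type*) where
  root : ι
  parent : ι → Σ i, α i
  anchor : ∀ i, α i
  depth : ι → ℕ
  depth_parent_lt : ∀ j, j ≠ root → depth (parent j).1 < depth j

namespace BlobTree

open Relation

variable {ι : Type*} {α : ι → Type*} (T : BlobTree α) (G : ∀ i, SimpleGraph (α i))

inductive Rel : (Σ i, α i) → (Σ i, α i) → Prop
  | blob {i : ι} {a b : α i} : (G i).Adj a b → Rel ⟨i, a⟩ ⟨i, b⟩
  | bridge {j : ι} : j ≠ T.root → Rel ⟨j, T.anchor j⟩ (T.parent j)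

def graph : SimpleGraph (Σ i, α i) := fromRel (T.Rel G)

def bridge (j : ι) : Sym2 (Σ i, α i) := s(⟨j, T.anchor j⟩, T.parent j)

def IsParent (j k : ι) : Prop := k ≠ T.root ∧ (T.parent k).1 = j

def subtree (j : ι) : Set (Σ i, α i) := {x | ReflTransGen T.IsParent j x.1}

def blob (i : ι) : (T.graph G).Subgraph := (⊤ : (T.graph G).Subgraph).induce {x | x.1 = i}

variable {T G}

theorem fst_parent_ne {j : ι} (hj : j ≠ T.root) : (T.parent j).1 ≠ j :=
  fun h => (T.depth_parent_lt j hj).ne (congrArg T.depth h)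

section Tree

theorem depth_lt_of_transGen {j k : ι} (h : TransGen T.IsParent j k) : T.depth j < T.depth k := by
  induction h with
  | single h => exact h.2 ▸ T.depth_parent_lt _ h.1
  | tail _ h ih => exact ih.trans (h.2 ▸ T.depth_parent_lt _ h.1)

theorem eq_of_reflTransGen_of_reflTransGen {j k : ι} (hjk : ReflTransGen T.IsParent j k)
    (hkj : ReflTransGen T.IsParent k j) : j = k := by
  rcases reflTransGen_iff_eq_or_transGen.1 hjk with rfl | hjk
  · rfl
  rcases reflTransGen_iff_eq_or_transGen.1 hkj with rfl | hkj
  · rfl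
  exact absurd ((depth_lt_of_transGen hjk).trans (depth_lt_of_transGen hkj)) (lt_irrefl _)

theorem reflTransGen_fst_parent_iff {j k : ι} (hk : k ≠ T.root) (hkj : k ≠ j) :
    ReflTransGen T.IsParent j (T.parent k).1 ↔ ReflTransGen T.IsParent j k := by
  refine ⟨fun h => h.tail ⟨hk, rfl⟩, fun h => ?_⟩
  rcases h.cases_tail with h | ⟨c, hc, hck⟩
  · exact absurd h hkj
  · exact hck.2 ▸ hc

theorem not_reflTransGen_fst_parent {j : ι} (hj : j ≠ T.root) :
    ¬ReflTransGen T.IsParent j (T.parent j).1 :=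
  fun h => fst_parent_ne hj (eq_of_reflTransGen_of_reflTransGen (.single ⟨hj, rfl⟩) h)

theorem exists_separating {k l : ι} (hkl : k ≠ l) :
    ∃ j, ¬(ReflTransGen T.IsParent j k ↔ ReflTransGen T.IsParent j l) := by
  by_cases hkl' : ReflTransGen T.IsParent k l
  · exact ⟨l, fun h => hkl (eq_of_reflTransGen_of_reflTransGen hkl' (h.2 .refl))⟩
  · exact ⟨k, fun h => hkl' (h.1 .refl)⟩

end Tree

section Graph

theorem graph_adj_bridge {j : ι} (hj : j ≠ T.root) :
    (T.graph G).Adj ⟨j, T.anchor j⟩ (T.parent j) :=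
  (fromRel_adj _ _ _).2
    ⟨fun h => fst_parent_ne hj (congrArg Sigma.fst h).symm, .inl (.bridge hj)⟩

theorem fst_eq_or_eq_bridge_of_adj {x y : Σ i, α i} (h : (T.graph G).Adj x y) :
    x.1 = y.1 ∨ ∃ j ≠ T.root, s(x, y) = T.bridge j := by
  obtain ⟨-, h | h⟩ := (fromRel_adj _ _ _).1 h <;> cases h
  · exact .inl rfl
  · exact .inr ⟨_, ‹_›, rfl⟩
  · exact .inl rfl
  · exact .inr ⟨_, ‹_›, Sym2.eq_swap⟩

theorem Rel.adj_of_mk {i : ι} {a b : α i} (h : T.Rel G ⟨i, a⟩ ⟨i, b⟩) :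
    (G i).Adj a b := by
  generalize hx : (⟨i, a⟩ : Σ i, α i) = x at h
  generalize hy : (⟨i, b⟩ : Σ i, α i) = y at h
  cases h with
  | blob h =>
    cases hx
    cases hy
    exact h
  | bridge hj =>
    cases hx
    exact absurd (congrArg Sigma.fst hy).symm (fst_parent_ne hj)

theorem graph_adj_mk_iff {i : ι} {a b : α i} :
    (T.graph G).Adj ⟨i, a⟩ ⟨i, b⟩ ↔ (G i).Adj a b := by
  refine ⟨fun h => ?_, fun h => (fromRel_adj _ _ _).2 ⟨fun e => h.ne ?_, .inl (.blob h)⟩⟩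
  · obtain ⟨-, h | h⟩ := (fromRel_adj _ _ _).1 h
    exacts [h.adj_of_mk, h.adj_of_mk.symm]
  · exact eq_of_heq (Sigma.mk.inj e).2

variable (T G) in
def embedding (i : ι) : G i ↪g T.graph G where
  toEmbedding := Function.Embedding.sigmaMk i
  map_rel_iff' := graph_adj_mk_iff

theorem mem_range_embedding {i : ι} {x : Σ i, α i} :
    x ∈ Set.range (T.embedding G i) ↔ x.1 = i :=
  ⟨by rintro ⟨a, rfl⟩; rfl, by obtain ⟨k, b⟩ := x; rintro rfl; exact ⟨b, rfl⟩⟩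

theorem connected_graph (hG : ∀ i, (G i).Connected) : (T.graph G).Connected := by
  have hreach : ∀ n (x : Σ i, α i), T.depth x.1 = n →
      (T.graph G).Reachable x ⟨T.root, T.anchor T.root⟩ := by
    intro n
    induction n using Nat.strong_induction_on with
    | _ n ih =>
      rintro ⟨i, a⟩ rfl
      have hi : (T.graph G).Reachable ⟨i, a⟩ ⟨i, T.anchor i⟩ :=
        ((hG i).preconnected a (T.anchor i)).map (T.embedding G i).toHom
      by_cases hroot : i = T.root
      · subst hroot
        exact hi
      · exact hi.trans ((graph_adj_bridge hroot).reachable.trans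
          (ih _ (T.depth_parent_lt i hroot) _ rfl))
  exact (connected_iff _).2 ⟨fun x y => (hreach _ x rfl).trans (hreach _ y rfl).symm,
    ⟨⟨T.root, T.anchor T.root⟩⟩⟩

end Graph

section Cut

theorem anchor_mem_subtree (j : ι) : ⟨j, T.anchor j⟩ ∈ T.subtree j := ReflTransGen.refl

theorem parent_not_mem_subtree {j : ι} (hj : j ≠ T.root) : T.parent j ∉ T.subtree j :=
  not_reflTransGen_fst_parent hj

theorem isOnlyCrossingEdge_subtree (j : ι) :
    (T.graph G).IsOnlyCrossingEdge (T.subtree j) (T.bridge j) := by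
  intro a b hab ha hb
  rcases fst_eq_or_eq_bridge_of_adj hab with h | ⟨k, hk, hbr⟩
  · exact absurd (show ReflTransGen T.IsParent j b.1 from h ▸ ha) hb
  by_cases hkj : k = j
  · exact hkj ▸ hbr
  have hside := reflTransGen_fst_parent_iff (j := j) hk hkj
  rcases Sym2.eq_iff.1 hbr with ⟨rfl, rfl⟩ | ⟨rfl, rfl⟩
  · exact absurd (hside.2 ha) hb
  · exact absurd (hside.1 ha) hb

theorem isBridge_bridge {j : ι} (hj : j ≠ T.root) : (T.graph G).IsBridge (T.bridge j) :=
  isBridge_iff_forall_walk_mem_edges.2 fun p =>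
    (isOnlyCrossingEdge_subtree j).mem_edges_of_not_iff p fun h =>
      parent_not_mem_subtree hj (h.1 (anchor_mem_subtree j))

theorem fst_eq_of_adj_of_not_isBridge {x y : Σ i, α i} (h : (T.graph G).Adj x y)
    (hxy : ¬(T.graph G).IsBridge s(x, y)) : x.1 = y.1 :=
  (fst_eq_or_eq_bridge_of_adj h).resolve_right fun ⟨_, hj, he⟩ =>
    hxy (he ▸ isBridge_bridge hj)

end Cut

section Blob

variable (T G) in
def blobIso (i : ι) : G i ≃g (T.blob G i).coe where
  toEquiv := (Equiv.sigmaSubtype i).symm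
  map_rel_iff' {a b} := by
    change i = i ∧ i = i ∧ (T.graph G).Adj ⟨i, a⟩ ⟨i, b⟩ ↔ _
    simp only [true_and, graph_adj_mk_iff]

theorem mk_mem_blob (i : ι) (a : α i) : ⟨i, a⟩ ∈ (T.blob G i).verts := rfl

theorem twoEdgeConnected_blob {i : ι} (hG : TwoEdgeConnected (G i)) :
    TwoEdgeConnected (T.blob G i).coe :=
  (T.blobIso G i).twoEdgeConnected hG

theorem le_blob_of_twoEdgeConnected {K : (T.graph G).Subgraph} (hK : TwoEdgeConnected K.coe)
    {x : Σ i, α i} (hx : x ∈ K.verts) : K ≤ T.blob G x.1 := by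
  have hfst : ∀ y ∈ K.verts, y.1 = x.1 := by
    intro y hy
    obtain ⟨p⟩ := hK.1.preconnected ⟨x, hx⟩ ⟨y, hy⟩
    refine p.apply_eq_of_forall_dart (fun z => z.1.1) (fun d _ => ?_) _ p.end_mem_support
    have hd : K.Adj d.fst d.snd := d.adj
    exact fst_eq_of_adj_of_not_isBridge (K.adj_sub hd) (hK.not_isBridge_of_adj hd)
  exact ⟨hfst, fun a b hab =>
    ⟨hfst a (K.edge_vert hab), hfst b (K.edge_vert hab.symm), K.adj_sub hab⟩⟩

theorem isBlob_blob {i : ι} (hG : TwoEdgeConnected (G i)) : IsBlob (T.graph G) (T.blob G i) :=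
  ⟨twoEdgeConnected_blob hG, fun _ hle hK =>
    le_antisymm (le_blob_of_twoEdgeConnected hK (hle.1 (mk_mem_blob i (T.anchor i)))) hle⟩

theorem exists_blob_eq (hG : ∀ i, TwoEdgeConnected (G i)) {D : (T.graph G).Subgraph}
    (hD : IsBlob (T.graph G) D) : ∃ i, T.blob G i = D := by
  obtain ⟨⟨x, hx⟩⟩ := hD.1.1.nonempty
  exact ⟨x.1, hD.2 _ (le_blob_of_twoEdgeConnected hD.1 hx) (twoEdgeConnected_blob (hG x.1))⟩

theorem blob_injective : Function.Injective (T.blob G) := fun i k h =>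
  show (⟨i, T.anchor i⟩ : Σ i, α i) ∈ (T.blob G k).verts from
    h ▸ mk_mem_blob i (T.anchor i)

end Blob

section Rigidity

variable (hG : ∀ i, TwoEdgeConnected (G i)) (φ : Immersion (T.graph G) (T.graph G))
include hG

theorem fst_toFun_eq_fst_toFun {x y : Σ i, α i} (hxy : x.1 = y.1) :
    (φ.toFun x).1 = (φ.toFun y).1 := by
  by_contra hne
  obtain ⟨j, hsep⟩ := exists_separating hne
  exact hsep (φ.mem_iff_mem_of_twoEdgeConnected (isOnlyCrossingEdge_subtree j)
    (twoEdgeConnected_blob (hG x.1)) rfl hxy.symm)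

theorem fst_eq_of_mem_support_walk {x y : Σ i, α i} (h : (T.graph G).Adj x y)
    (hxy : x.1 = y.1) : ∀ z ∈ (φ.walk h).support, z.1 = (φ.toFun x).1 := by
  refine (φ.walk h).apply_eq_of_forall_dart Sigma.fst fun d hd => ?_
  refine (fst_eq_or_eq_bridge_of_adj d.adj).resolve_right fun ⟨j, hj, hbr⟩ => ?_
  refine (isOnlyCrossingEdge_subtree j).not_iff_of_mem_edges (anchor_mem_subtree j)
    (parent_not_mem_subtree hj) _ (φ.walk_isPath h).isTrail
    (hbr.symm ▸ List.mem_map_of_mem hd : T.bridge j ∈ (φ.walk h).edges) ?_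
  show ReflTransGen T.IsParent j (φ.toFun x).1 ↔ ReflTransGen T.IsParent j (φ.toFun y).1
  rw [fst_toFun_eq_fst_toFun hG φ hxy]

variable (hanti : ∀ i j, i ≠ j → ¬Immersed (G i) (G j))
include hanti

theorem fst_toFun_eq (x : Σ i, α i) : (φ.toFun x).1 = x.1 := by
  obtain ⟨i, a⟩ := x
  by_contra hne
  let ψ := φ.comap (T.embedding G i)
  have hv : ∀ b, ψ.toFun b ∈ Set.range (T.embedding G (φ.toFun ⟨i, a⟩).1) := fun _ =>
    mem_range_embedding.2 (fst_toFun_eq_fst_toFun hG φ rfl)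
  have hw : ∀ ⦃b c⦄ (h : (G i).Adj b c), ∀ z ∈ (ψ.walk h).support,
      z ∈ Set.range (T.embedding G (φ.toFun ⟨i, a⟩).1) := fun _ _ h z hz =>
    mem_range_embedding.2 <|
      (fst_eq_of_mem_support_walk hG φ ((T.embedding G i).map_adj_iff.2 h) rfl z hz).trans
        (fst_toFun_eq_fst_toFun hG φ rfl)
  exact hanti i _ (Ne.symm hne)
    ⟨(ψ.induce _ hv hw).map (Embedding.isoInduceRange _).symm.toEmbedding⟩

theorem toFun_mem_subtree_iff {x : Σ i, α i} {j : ι} :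
    φ.toFun x ∈ T.subtree j ↔ x ∈ T.subtree j := by
  show ReflTransGen T.IsParent j (φ.toFun x).1 ↔ ReflTransGen T.IsParent j x.1
  rw [fst_toFun_eq hG φ hanti]

theorem bridge_mem_edges_walk {j : ι} (hj : j ≠ T.root) :
    T.bridge j ∈ (φ.walk (graph_adj_bridge hj)).edges := by
  refine (isOnlyCrossingEdge_subtree j).mem_edges_of_not_iff _ ?_
  rw [toFun_mem_subtree_iff hG φ hanti, toFun_mem_subtree_iff hG φ hanti]
  exact fun h => parent_not_mem_subtree hj (h.1 (anchor_mem_subtree j))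

theorem toFun_eq (hspan : ∀ x, ∃ j ≠ T.root, T.parent j = x) (x : Σ i, α i) :
    φ.toFun x = x := by
  have hfree : ∀ w, φ.toFun w ≠ w → ∀ z, φ.toFun z ≠ w := by
    rintro w hw z rfl
    obtain ⟨j, hj, hpj⟩ := hspan (φ.toFun z)
    have hz₁ : z ≠ ⟨j, T.anchor j⟩ := fun h => fst_parent_ne hj <| by
      rw [hpj, fst_toFun_eq hG φ hanti, h]
    have hz₂ : z ≠ T.parent j := fun h => by
      have hfix : φ.toFun z = z := hpj.symm.trans h.symm
      exact hw (by rw [hfix, hfix])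
    refine φ.avoid (graph_adj_bridge hj) z hz₁ hz₂ ?_
    rw [← hpj]
    exact (φ.walk _).snd_mem_support_of_mem_edges (bridge_mem_edges_walk hG φ hanti hj)
  by_contra hx
  by_cases hfx : φ.toFun (φ.toFun x) = φ.toFun x
  · exact hx (φ.injective hfx)
  · exact hfree _ hfx x rfl

theorem isTrivial (hspan : ∀ x, ∃ j ≠ T.root, T.parent j = x) : φ.IsTrivial :=
  φ.isTrivial_of_forall_toFun_eq (toFun_eq hG φ hanti hspan)

end Rigidity

section Existence

open Cardinal

/-- Level `n + 1` is indexed by the copy `{n} × ι` of `ι` inside `ι ≃ Option (ℕ × ι)`, and its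
members are attached along a surjection onto the vertices of level `n`; so every vertex becomes a
parent. -/
theorem exists_forall_exists_parent_eq {ι : Type u} {α : ι → Type u} [Infinite ι]
    (hα : ∀ i, Nonempty (α i)) (hcard : ∀ i, #(α i) ≤ #ι) :
    ∃ T : BlobTree α, ∀ x, ∃ j ≠ T.root, T.parent j = x := by
  obtain ⟨E⟩ : Nonempty (ι ≃ Option (ℕ × ι)) := by
    rw [← Cardinal.eq, mk_option, mk_prod, lift_uzero, mk_nat, lift_aleph0,
      mul_eq_right (aleph0_le_mk ι) (aleph0_le_mk ι) aleph0_ne_zero, add_one_eq (aleph0_le_mk ι)]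
  let anchor i : α i := Classical.choice (hα i)
  let depth (j : ι) : ℕ := (E j).elim 0 fun p => p.1 + 1
  have hlevel : ∀ n, ∃ π : ι → {x : Σ i, α i // depth x.1 = n}, π.Surjective := by
    intro n
    obtain ⟨j, hj⟩ : ∃ j, depth j = n := by
      cases n with
      | zero => exact ⟨E.symm none, by simp [depth]⟩
      | succ n => exact ⟨E.symm (some (n, Classical.arbitrary ι)), by simp [depth]⟩
    refine Function.exists_surjective_iff.2 ⟨⟨fun _ => ⟨⟨j, anchor j⟩, hj⟩⟩, ?_⟩
    exact Cardinal.le_def _ _ |>.1 ((mk_subtype_le _).trans (mk_sigma_le_of_forall_le hcard))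
  choose π hπ using hlevel
  refine ⟨{ root := E.symm none
            parent := fun j => (E j).elim ⟨j, anchor j⟩ fun p => (π p.1 p.2).1
            anchor, depth
            depth_parent_lt := fun j hj => ?_ }, fun x => ?_⟩
  · obtain ⟨⟨n, y⟩, hE⟩ :=
      Option.ne_none_iff_exists'.1 fun h => hj (E.symm_apply_eq.2 h.symm).symm
    simp [depth, hE, (π n y).2]
  · obtain ⟨y, hy⟩ := hπ (depth x.1) ⟨x, rfl⟩
    refine ⟨E.symm (some (depth x.1, y)), fun h => ?_, ?_⟩
    · simpa using E.symm.injective h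
    · simp [hy]

end Existence

end BlobTree

theorem exists_rigid_connected_graph_with_blobs_general {U ι : Type}
    (s : ι → Set U) (Gr : ∀ i : ι, SimpleGraph (s i))
    (h1 : Infinite ι)
    (h4 : ∀ i : ι, TwoEdgeConnected (Gr i))
    (h5 : ∀ i : ι, Cardinal.mk (s i) ≤ Cardinal.mk ι)
    (h6 : ∀ i j : ι, i ≠ j → ¬ Immersed (Gr i) (Gr j)) :
    ∃ (W : Type) (G : SimpleGraph W) (B : ι → G.Subgraph),
      G.Connected ∧
      Function.Injective B ∧
      (∀ i : ι, IsBlob G (B i)) ∧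
      (∀ D : G.Subgraph, IsBlob G D → ∃ i : ι, B i = D) ∧
      (∀ i : ι, Nonempty ((B i).coe ≃g Gr i)) ∧
      (∀ φ : Immersion G G, φ.IsTrivial) := by
  obtain ⟨T, hT⟩ := BlobTree.exists_forall_exists_parent_eq (fun i => (h4 i).1.nonempty) h5
  exact ⟨_, T.graph Gr, T.blob Gr, BlobTree.connected_graph fun i => (h4 i).1,
    BlobTree.blob_injective, fun i => BlobTree.isBlob_blob (h4 i),
    fun _ => BlobTree.exists_blob_eq h4, fun i => ⟨(T.blobIso Gr i).symm⟩,
    fun φ => BlobTree.isTrivial h4 φ h6 hT⟩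

/-- Given an infinite immersion antichain `𝓗` of pairwise vertex-disjoint infinite
2-edge-connected graphs, each with at most `|𝓗|` vertices, there is a connected graph `G`
whose set of blobs is exactly `𝓗` and which admits no self-immersion but the trivial one. -/
theorem exists_rigid_connected_graph_with_blobs {U ι : Type}
    (s : ι → Set U) (Gr : ∀ i : ι, SimpleGraph (s i))
    (h1 : Infinite ι)
    (h2 : ∀ i j : ι, i ≠ j → Disjoint (s i) (s j))
    (h3 : ∀ i : ι, (s i).Infinite)
    (h4 : ∀ i : ι, TwoEdgeConnected (Gr i))
    (h5 : ∀ i : ι, Cardinal.mk (s i) ≤ Cardinal.mk ι)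
    (h6 : ∀ i j : ι, i ≠ j → ¬ Immersed (Gr i) (Gr j)) :
    ∃ (W : Type) (G : SimpleGraph W) (B : ι → G.Subgraph),
      G.Connected ∧
      Function.Injective B ∧
      (∀ i : ι, IsBlob G (B i)) ∧
      (∀ D : G.Subgraph, IsBlob G D → ∃ i : ι, B i = D) ∧
      (∀ i : ι, Nonempty ((B i).coe ≃g Gr i)) ∧
      (∀ φ : Immersion G G, φ.IsTrivial) :=
  exists_rigid_connected_graph_with_blobs_general s Gr h1 h4 h5 h6
end

section
/- A graph H is immersed in a graph G if and only if H is isomorphic to a graph obtained from G by first deleting a set V of vertices, then deleting a set E of edges, and then lifting a liftable set S of pairwise edge-disjoint finite paths. -/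
open SimpleGraph

/-- The graph obtained from `G` by deleting a set `Vdel` of vertices (keeping them as
isolated placeholders) and a set `Edel` of edges. -/
def deletedGraph {W : Type*} (G : SimpleGraph W) (Vdel : Set W) (Edel : Set (Sym2 W)) :
    SimpleGraph W where
  Adj x y := G.Adj x y ∧ s(x, y) ∉ Edel ∧ x ∉ Vdel ∧ y ∉ Vdel
  symm := by
    constructor
    intro x y h
    exact ⟨h.1.symm, by rw [Sym2.eq_swap]; exact h.2.1, h.2.2.2, h.2.2.1⟩
  loopless := ⟨fun x h => G.irrefl h.1⟩

/-- A system of walks in `G`, recorded together with their endpoints. -/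
abbrev PathSys {W : Type*} (G : SimpleGraph W) := Set (Σ a b : W, G.Walk a b)

/-- `w` is an internal vertex of the walk `p`: it lies on `p` but is not an endpoint. -/
def IsInternal {W : Type*} {G : SimpleGraph W} (p : Σ a b : W, G.Walk a b) (w : W) : Prop :=
  w ∈ p.2.2.support ∧ w ≠ p.1 ∧ w ≠ p.2.1

/-- The vertices surviving the whole operation: vertices not deleted and not internal to
any path of the lifted system `S`. -/
def liftedVerts {W : Type*} (G : SimpleGraph W) (Vdel : Set W) (Edel : Set (Sym2 W))
    (S : PathSys (deletedGraph G Vdel Edel)) : Set W :=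
  {w | w ∉ Vdel ∧ ∀ p ∈ S, ¬ IsInternal p w}

/-- The graph obtained from `G` by deleting the vertices in `Vdel`, deleting the edges in
`Edel`, and then lifting the set `S` of paths: internal vertices of paths in `S` are
deleted and the end-vertices of each path in `S` are joined by an edge. -/
def liftedGraph {W : Type*} (G : SimpleGraph W) (Vdel : Set W) (Edel : Set (Sym2 W))
    (S : PathSys (deletedGraph G Vdel Edel)) :
    SimpleGraph (liftedVerts G Vdel Edel S) where
  Adj x y := x ≠ y ∧ ((deletedGraph G Vdel Edel).Adj x y ∨
    ∃ p ∈ S, (p.1 = (x : W) ∧ p.2.1 = (y : W)) ∨ (p.1 = (y : W) ∧ p.2.1 = (x : W)))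
  symm := by
    constructor
    intro x y h
    refine ⟨h.1.symm, ?_⟩
    rcases h.2 with h' | ⟨p, hp, h'⟩
    · exact Or.inl h'.symm
    · exact Or.inr ⟨p, hp, h'.symm⟩
  loopless := ⟨fun x h => h.1 rfl⟩

/-!
Given an immersion `φ`, delete every vertex and edge of `G` that `φ` does not use and lift the
paths `φ(e)`, one for each edge `e` of `H`: the surviving vertices are exactly the branch vertices
`φ(v)`, and two of them become adjacent iff they are adjacent in `H`. Conversely, the lifted graph
immerses in `G` by its inclusion, sending a lifted edge back to a path of `S` joining its ends and
any other edge to itself; since the vertices of the lifted graph are internal to no path of `S`,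
these paths avoid the other branch vertices, and two of them can share an edge only if they come
from the same path of `S`, hence from the same edge.
-/

open SimpleGraph

namespace SimpleGraph.Walk

variable {W : Type*} {G : SimpleGraph W}

open Classical in
noncomputable def orient {a b x y : W} (p : G.Walk a b) (h : s(a, b) = s(x, y)) : G.Walk x y :=
  if ha : a = x then p.copy ha (Sym2.congr_right.mp (ha ▸ h))
  else
    have hb : a = y ∧ b = x := (Sym2.eq_iff.mp h).resolve_left fun h' => ha h'.1
    p.reverse.copy hb.2 hb.1

variable {a b x y : W} (p : G.Walk a b) (h : s(a, b) = s(x, y))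

lemma isPath_orient_iff : (p.orient h).IsPath ↔ p.IsPath := by
  unfold orient; split_ifs <;> simp [isPath_copy, isPath_reverse_iff]

lemma mem_support_orient_iff {w : W} : w ∈ (p.orient h).support ↔ w ∈ p.support := by
  unfold orient; split_ifs <;> simp

lemma mem_edges_orient_iff {e : Sym2 W} : e ∈ (p.orient h).edges ↔ e ∈ p.edges := by
  unfold orient; split_ifs <;> simp

lemma reverse_orient (hxy : x ≠ y) :
    (p.orient h).reverse = p.orient (h.trans Sym2.eq_swap) := by
  unfold orient
  by_cases hax : a = x
  · subst hax
    simp [hxy, reverse_copy]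
  · have hay : a = y := ((Sym2.eq_iff.mp h).resolve_left fun h' => hax h'.1).1
    subst hay
    simp [hax, reverse_copy]

end SimpleGraph.Walk

section PathSys

variable {W : Type*} {G : SimpleGraph W}

lemma eq_or_eq_of_not_isInternal {p : Σ a b : W, G.Walk a b} {w : W}
    (hw : w ∈ p.2.2.support) (hint : ¬ IsInternal p w) : w = p.1 ∨ w = p.2.1 := by
  by_contra! h
  exact hint ⟨hw, h.1, h.2⟩

lemma ends_eq_of_not_isInternal {p : Σ a b : W, G.Walk a b} {x y : W} (hxy : x ≠ y)
    (hx : x ∈ p.2.2.support) (hy : y ∈ p.2.2.support)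
    (hx' : ¬ IsInternal p x) (hy' : ¬ IsInternal p y) : s(p.1, p.2.1) = s(x, y) := by
  rcases eq_or_eq_of_not_isInternal hx hx' with rfl | rfl <;>
    rcases eq_or_eq_of_not_isInternal hy hy' with rfl | rfl
  all_goals first | exact absurd rfl hxy | rfl | exact Sym2.eq_swap

def PathSys.Joins (S : PathSys G) (e : Sym2 W) : Prop :=
  ∃ p ∈ S, s(p.1, p.2.1) = e

variable {S : PathSys G} {e e' : Sym2 W}

noncomputable def PathSys.Joins.path (h : S.Joins e) : Σ a b : W, G.Walk a b :=
  h.choose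

lemma PathSys.Joins.path_mem (h : S.Joins e) : h.path ∈ S :=
  h.choose_spec.1

lemma PathSys.Joins.path_ends (h : S.Joins e) : s(h.path.1, h.path.2.1) = e :=
  h.choose_spec.2

lemma PathSys.Joins.path_congr (h : S.Joins e) (h' : S.Joins e') (he : e = e') : h.path = h'.path := by
  subst he; rfl

end PathSys

section Lift

variable {W : Type*} {G : SimpleGraph W} {Vdel : Set W} {Edel : Set (Sym2 W)}
  {S : PathSys (deletedGraph G Vdel Edel)}

lemma deletedGraph_le : deletedGraph G Vdel Edel ≤ G := fun _ _ h => h.1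

lemma liftedGraph_adj_iff {x y : liftedVerts G Vdel Edel S} :
    (liftedGraph G Vdel Edel S).Adj x y ↔
      x ≠ y ∧ ((deletedGraph G Vdel Edel).Adj x y ∨ S.Joins s((x : W), (y : W))) := by
  simp only [liftedGraph, PathSys.Joins, Sym2.eq_iff]

lemma joins_of_mem_edges {p : Σ a b : W, (deletedGraph G Vdel Edel).Walk a b} (hp : p ∈ S)
    {x y : liftedVerts G Vdel Edel S} (he : s((x : W), (y : W)) ∈ p.2.2.edges) :
    S.Joins s((x : W), (y : W)) :=
  ⟨p, hp, ends_eq_of_not_isInternal (p.2.2.adj_of_mem_edges he).ne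
    (p.2.2.fst_mem_support_of_mem_edges he) (p.2.2.snd_mem_support_of_mem_edges he)
    (x.2.2 p hp) (y.2.2 p hp)⟩

namespace liftedGraph

open Classical in
noncomputable def walk {x y : liftedVerts G Vdel Edel S}
    (hxy : (liftedGraph G Vdel Edel S).Adj x y) : G.Walk x y :=
  if hj : S.Joins s((x : W), (y : W)) then
    (hj.path.2.2.mapLe deletedGraph_le).orient hj.path_ends
  else
    Walk.cons ((liftedGraph_adj_iff.mp hxy).2.resolve_right hj).1 Walk.nil

variable {x y : liftedVerts G Vdel Edel S} (hxy : (liftedGraph G Vdel Edel S).Adj x y)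

lemma walk_of_joins (hj : S.Joins s((x : W), (y : W))) :
    walk hxy = (hj.path.2.2.mapLe deletedGraph_le).orient hj.path_ends :=
  dif_pos hj

lemma walk_of_not_joins (hj : ¬ S.Joins s((x : W), (y : W))) :
    walk hxy = Walk.cons ((liftedGraph_adj_iff.mp hxy).2.resolve_right hj).1 Walk.nil :=
  dif_neg hj

lemma walk_isPath (hS : ∀ p ∈ S, p.2.2.IsPath) : (walk hxy).IsPath := by
  by_cases hj : S.Joins s((x : W), (y : W))
  · rw [walk_of_joins hxy hj, Walk.isPath_orient_iff, Walk.isPath_mapLe]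
    exact hS _ hj.path_mem
  · rw [walk_of_not_joins hxy hj]
    exact Walk.IsPath.mk' (by simpa using Subtype.coe_ne_coe.mpr hxy.1)

lemma walk_symm : walk hxy.symm = (walk hxy).reverse := by
  by_cases hj : S.Joins s((x : W), (y : W))
  · have hj' : S.Joins s((y : W), (x : W)) := Sym2.eq_swap (a := (x : W)) ▸ hj
    rw [walk_of_joins hxy hj, walk_of_joins hxy.symm hj', Walk.reverse_orient _ _
      (Subtype.coe_ne_coe.mpr hxy.1)]
    have orient_eq : ∀ p q : Σ a b : W, (deletedGraph G Vdel Edel).Walk a b, p = q →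
        ∀ (hp : s(p.1, p.2.1) = s((y : W), (x : W))) (hq : s(q.1, q.2.1) = s((y : W), (x : W))),
          (p.2.2.mapLe deletedGraph_le).orient hp = (q.2.2.mapLe deletedGraph_le).orient hq := by
      rintro p _ rfl _ _; rfl
    exact orient_eq _ _ (hj'.path_congr hj Sym2.eq_swap) _ _
  · have hj' : ¬ S.Joins s((y : W), (x : W)) := Sym2.eq_swap (a := (x : W)) ▸ hj
    rw [walk_of_not_joins hxy hj, walk_of_not_joins hxy.symm hj', Walk.reverse_singleton]

lemma mem_support_walk {w : liftedVerts G Vdel Edel S} (hw : (w : W) ∈ (walk hxy).support) :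
    (w : W) = x ∨ (w : W) = y := by
  by_cases hj : S.Joins s((x : W), (y : W))
  · rw [walk_of_joins hxy hj, Walk.mem_support_orient_iff, Walk.support_mapLe_eq_support] at hw
    have hw' : (w : W) ∈ s(hj.path.1, hj.path.2.1) := by
      rcases eq_or_eq_of_not_isInternal hw (w.2.2 _ hj.path_mem) with h | h <;> simp [h]
    rwa [hj.path_ends, Sym2.mem_iff] at hw'
  · simpa [walk_of_not_joins hxy hj] using hw

lemma mem_edges_walk {e : Sym2 W} (he : e ∈ (walk hxy).edges) :
    (∃ p ∈ S, s(p.1, p.2.1) = s((x : W), (y : W)) ∧ e ∈ p.2.2.edges) ∨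
      (¬ S.Joins s((x : W), (y : W)) ∧ e = s((x : W), (y : W))) := by
  by_cases hj : S.Joins s((x : W), (y : W))
  · rw [walk_of_joins hxy hj, Walk.mem_edges_orient_iff, Walk.edges_mapLe_eq_edges] at he
    exact Or.inl ⟨_, hj.path_mem, hj.path_ends, he⟩
  · rw [walk_of_not_joins hxy hj, Walk.edges_cons, Walk.edges_nil, List.mem_singleton] at he
    exact Or.inr ⟨hj, he⟩

lemma ends_eq_of_mem_edges_walk
    (hdisj : ∀ p ∈ S, ∀ q ∈ S, p ≠ q → ∀ e ∈ p.2.2.edges, e ∉ q.2.2.edges)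
    {x' y' : liftedVerts G Vdel Edel S} (hxy' : (liftedGraph G Vdel Edel S).Adj x' y')
    {e : Sym2 W} (he : e ∈ (walk hxy).edges) (he' : e ∈ (walk hxy').edges) :
    s((x : W), (y : W)) = s((x' : W), (y' : W)) := by
  rcases mem_edges_walk hxy he with ⟨p, hp, hpxy, hep⟩ | ⟨hj, rfl⟩ <;>
    rcases mem_edges_walk hxy' he' with ⟨q, hq, hqxy, heq⟩ | ⟨hj', hee⟩
  · by_contra hne
    exact hdisj p hp q hq (fun hpq => hne (hpxy.symm.trans (hpq ▸ hqxy))) e hep heq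
  · exact absurd (joins_of_mem_edges hp (hee ▸ hep)) hj'
  · exact absurd (joins_of_mem_edges hq heq) hj
  · exact hee

end liftedGraph

noncomputable def liftedGraph.immersion (hS : ∀ p ∈ S, p.2.2.IsPath)
    (hdisj : ∀ p ∈ S, ∀ q ∈ S, p ≠ q → ∀ e ∈ p.2.2.edges, e ∉ q.2.2.edges) :
    Immersion (liftedGraph G Vdel Edel S) G where
  toFun := Subtype.val
  injective := Subtype.val_injective
  walk _ _ h := liftedGraph.walk h
  walk_isPath _ _ h := liftedGraph.walk_isPath h hS
  walk_nontrivial _ _ h :=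
    Nat.pos_of_ne_zero fun h0 => h.1 (Subtype.ext (Walk.eq_of_length_eq_zero h0))
  walk_symm _ _ h := liftedGraph.walk_symm h
  walk_edgeDisjoint _ _ _ _ h h' hne e he he' :=
    (Sym2.map.injective Subtype.val_injective).ne hne
      (liftedGraph.ends_eq_of_mem_edges_walk h hdisj h' he he')
  avoid _ _ h w hwx hwy hw := by
    rcases liftedGraph.mem_support_walk h hw with hw | hw
    exacts [hwx (Subtype.ext hw), hwy (Subtype.ext hw)]

end Lift

namespace Immersion

variable {U V W : Type*} {F : SimpleGraph U} {H : SimpleGraph V} {G : SimpleGraph W}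

def comp (φ : Immersion H G) (f : F →g H) (hf : Function.Injective f) : Immersion F G where
  toFun := φ.toFun ∘ f
  injective := φ.injective.comp hf
  walk _ _ h := φ.walk (f.map_adj h)
  walk_isPath _ _ _ := φ.walk_isPath _
  walk_nontrivial _ _ _ := φ.walk_nontrivial _
  walk_symm _ _ _ := φ.walk_symm _
  walk_edgeDisjoint _ _ _ _ _ _ hne :=
    φ.walk_edgeDisjoint _ _ ((Sym2.map.injective hf).ne hne)
  avoid _ _ _ _ hwu hwv := φ.avoid _ _ (hf.ne hwu) (hf.ne hwv)

variable (φ : Immersion H G)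

lemma eq_or_eq_of_mem_support {u v : V} (h : H.Adj u v) {w : V}
    (hw : φ.toFun w ∈ (φ.walk h).support) : w = u ∨ w = v := by
  by_contra! hne
  exact φ.avoid h w hne.1 hne.2 hw

lemma adj_of_mem_support {u v : V} (h : H.Adj u v) {a b : V} (hab : a ≠ b)
    (ha : φ.toFun a ∈ (φ.walk h).support) (hb : φ.toFun b ∈ (φ.walk h).support) : H.Adj a b := by
  rcases φ.eq_or_eq_of_mem_support h ha with rfl | rfl <;>
    rcases φ.eq_or_eq_of_mem_support h hb with rfl | rfl
  all_goals first | exact absurd rfl hab | exact h | exact h.symm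

def unusedVerts : Set W :=
  {w | w ∉ Set.range φ.toFun ∧ ∀ ⦃u v : V⦄ (h : H.Adj u v), w ∉ (φ.walk h).support}

def unusedEdges : Set (Sym2 W) :=
  {e | ∀ ⦃u v : V⦄ (h : H.Adj u v), e ∉ (φ.walk h).edges}

lemma walk_edges_mem_deletedGraph {u v : V} (h : H.Adj u v) :
    ∀ e ∈ (φ.walk h).edges, e ∈ (deletedGraph G φ.unusedVerts φ.unusedEdges).edgeSet := by
  intro e he
  induction e using Sym2.ind with
  | _ x y =>
    exact ⟨(φ.walk h).adj_of_mem_edges he, fun hunused => hunused h he,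
      fun hunused => hunused.2 h ((φ.walk h).fst_mem_support_of_mem_edges he),
      fun hunused => hunused.2 h ((φ.walk h).snd_mem_support_of_mem_edges he)⟩

/-- The order on `V` picks one orientation of each edge of `H`, so that it contributes a single
path. -/
def pathSys [LinearOrder V] : PathSys (deletedGraph G φ.unusedVerts φ.unusedEdges) :=
  {p | ∃ (u v : V) (h : H.Adj u v), u < v ∧
    p = ⟨φ.toFun u, φ.toFun v, (φ.walk h).transfer _ (φ.walk_edges_mem_deletedGraph h)⟩}

variable [LinearOrder V]

lemma pathSys_isPath : ∀ p ∈ φ.pathSys, p.2.2.IsPath ∧ 0 < p.2.2.length := by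
  rintro p ⟨u, v, h, -, rfl⟩
  exact ⟨(φ.walk_isPath h).transfer _, by simpa using φ.walk_nontrivial h⟩

lemma pathSys_edgeDisjoint :
    ∀ p ∈ φ.pathSys, ∀ q ∈ φ.pathSys, p ≠ q → ∀ e ∈ p.2.2.edges, e ∉ q.2.2.edges := by
  rintro p ⟨u, v, h, huv, rfl⟩ q ⟨u', v', h', huv', rfl⟩ hpq e he he'
  simp only [Walk.edges_transfer] at he he'
  refine φ.walk_edgeDisjoint h h' (fun heq => hpq ?_) e he he'
  rcases Sym2.eq_iff.mp heq with ⟨rfl, rfl⟩ | ⟨rfl, rfl⟩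
  · rfl
  · exact absurd huv' (asymm huv)

lemma not_isInternal_pathSys (v : V) : ∀ p ∈ φ.pathSys, ¬ IsInternal p (φ.toFun v) := by
  rintro p ⟨u', v', h', -, rfl⟩ ⟨hv, hvu', hvv'⟩
  rw [Walk.support_transfer] at hv
  rcases φ.eq_or_eq_of_mem_support h' hv with rfl | rfl
  exacts [hvu' rfl, hvv' rfl]

lemma exists_mem_pathSys {u v : V} (h : H.Adj u v) :
    ∃ p ∈ φ.pathSys, s(p.1, p.2.1) = s(φ.toFun u, φ.toFun v) ∧
      ∀ w ∈ (φ.walk h).support, w ∈ p.2.2.support := by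
  rcases lt_or_gt_of_ne h.ne with huv | hvu
  · exact ⟨_, ⟨u, v, h, huv, rfl⟩, rfl, by simp⟩
  · refine ⟨_, ⟨v, u, h.symm, hvu, rfl⟩, Sym2.eq_swap, ?_⟩
    simp [φ.walk_symm h]

lemma liftedVerts_eq_range :
    liftedVerts G φ.unusedVerts φ.unusedEdges φ.pathSys = Set.range φ.toFun := by
  ext w
  refine ⟨fun ⟨hw, hint⟩ => ?_, ?_⟩
  · by_contra hrange
    obtain ⟨u, v, h, hwuv⟩ : ∃ (u v : V) (h : H.Adj u v), w ∈ (φ.walk h).support := by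
      by_contra! hall
      exact hw ⟨hrange, hall⟩
    obtain ⟨p, hp, -, hwp⟩ := φ.exists_mem_pathSys h
    have hends := eq_or_eq_of_not_isInternal (hwp w hwuv) (hint p hp)
    obtain ⟨u', v', h', _, rfl⟩ := hp
    rcases hends with hw' | hw'
    exacts [hrange ⟨u', hw'.symm⟩, hrange ⟨v', hw'.symm⟩]
  · rintro ⟨v, rfl⟩
    exact ⟨fun hv => hv.1 ⟨v, rfl⟩, φ.not_isInternal_pathSys v⟩

lemma liftedGraph_adj_iff_adj {a b : V}
    {x y : liftedVerts G φ.unusedVerts φ.unusedEdges φ.pathSys}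
    (hx : (x : W) = φ.toFun a) (hy : (y : W) = φ.toFun b) :
    (liftedGraph G φ.unusedVerts φ.unusedEdges φ.pathSys).Adj x y ↔ H.Adj a b := by
  have hxy : x ≠ y ↔ a ≠ b := by
    rw [Ne, Ne, ← Subtype.coe_inj, hx, hy, φ.injective.eq_iff]
  rw [liftedGraph_adj_iff, hxy, hx, hy]
  constructor
  · rintro ⟨hab, hdel | ⟨p, hp, hends⟩⟩
    · obtain ⟨u, v, h, he⟩ : ∃ (u v : V) (h : H.Adj u v),
          s(φ.toFun a, φ.toFun b) ∈ (φ.walk h).edges := by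
        by_contra! hall
        exact hdel.2.1 hall
      exact φ.adj_of_mem_support h hab ((φ.walk h).fst_mem_support_of_mem_edges he)
        ((φ.walk h).snd_mem_support_of_mem_edges he)
    · obtain ⟨u, v, h, _, rfl⟩ := hp
      have huv : s(u, v) = s(a, b) := Sym2.map.injective φ.injective (a₁ := s(u, v)) hends
      rw [← mem_edgeSet, ← huv]
      exact h
  · intro h
    obtain ⟨p, hp, hends, -⟩ := φ.exists_mem_pathSys h
    exact ⟨h.ne, Or.inr ⟨p, hp, hends⟩⟩

noncomputable def isoLiftedGraph : H ≃g liftedGraph G φ.unusedVerts φ.unusedEdges φ.pathSys where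
  toEquiv :=
    (Equiv.ofInjective φ.toFun φ.injective).trans (Equiv.setCongr φ.liftedVerts_eq_range.symm)
  map_rel_iff' := φ.liftedGraph_adj_iff_adj rfl rfl

end Immersion

/-- `H` is immersed in `G` if and only if `H` is isomorphic to a graph obtained from `G`
by deleting a set of vertices, deleting a set of edges, and then lifting a liftable set
of pairwise edge-disjoint nontrivial finite paths. -/
theorem immersed_iff_delete_lift {V W : Type} (H : SimpleGraph V) (G : SimpleGraph W) :
    Immersed H G ↔
    ∃ (Vdel : Set W) (Edel : Set (Sym2 W)) (S : PathSys (deletedGraph G Vdel Edel)),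
      (∀ p ∈ S, p.2.2.IsPath ∧ 0 < p.2.2.length) ∧
      (∀ p ∈ S, ∀ q ∈ S, p ≠ q → ∀ e ∈ p.2.2.edges, e ∉ q.2.2.edges) ∧
      (∀ p ∈ S, ∀ q ∈ S, ¬ IsInternal q p.1 ∧ ¬ IsInternal q p.2.1) ∧
      Nonempty (H ≃g liftedGraph G Vdel Edel S) := by
  constructor
  · rintro ⟨φ⟩
    let _ : LinearOrder V := IsWellOrder.linearOrder WellOrderingRel
    refine ⟨φ.unusedVerts, φ.unusedEdges, φ.pathSys, φ.pathSys_isPath,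
      φ.pathSys_edgeDisjoint, ?_, ⟨φ.isoLiftedGraph⟩⟩
    rintro p ⟨u, v, h, -, rfl⟩ q hq
    exact ⟨φ.not_isInternal_pathSys u q hq, φ.not_isInternal_pathSys v q hq⟩
  · rintro ⟨Vdel, Edel, S, hS, hdisj, -, ⟨f⟩⟩
    exact ⟨(liftedGraph.immersion (fun p hp => (hS p hp).1) hdisj).comp
      f.toEmbedding.toHom f.injective⟩
end
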